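/- arXiv:0805.3559 — 2 statements merged into one kernel-verified Lean document; each statement's English description precedes it below -/
import Mathlib

section
/- Linearity: let f, g : ℝ → ℝ with antiderivatives F, G, and suppose lim_{b→∞} ∫₀^{c_f} F(x+b) z_f'(x) dx and lim_{b→∞} ∫₀^{c_g} G(x+b) z_g'(x) dx both exist, where z_f', z_g' are supported in [0,c_f], [0,c_g] and each integrates to -1. Then with z' the negative convolution of z_f' and z_g', the limit lim_{b→∞} ∫₀^{c_f+c_g} (αF + βG)(x+b) z'(x) dx exists and equals α·lim_b ∫₀^{c_f} F(x+b) z_f'(x) dx + β·lim_b ∫₀^{c_g} G(x+b) z_g'(x) dx, for all real α, β. -/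
/-!
By Fubini and translation invariance,
`∫₀^{c_f+c_g} F(x+b) z'(x) dx = -∫ z_g'(t) H_b(t) dt` with `H_b(t) = ∫₀^{c_f} F(x+t+b) z_f'(x) dx`.
As `b → ∞`, `H_b → L_f` uniformly on `[0, c_g] ⊇ supp z_g'`, so by dominated convergence the right
side tends to `-(∫ z_g') L_f = L_f`. Since convolution is commutative, the same argument with the
roles of `z_f'` and `z_g'` exchanged handles `G`, and linearity of the integral finishes.
-/

open MeasureTheory Filter intervalIntegral Set Topology

theorem intervalIntegral_eq_integral_of_forall_notMem_Icc {E : Type*} [NormedAddCommGroup E]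
    [NormedSpace ℝ E] {a b : ℝ} {f : ℝ → E} (hab : a ≤ b) (hf : ∀ x ∉ Icc a b, f x = 0) :
    ∫ x in a..b, f x = ∫ x, f x := by
  rw [integral_of_le hab, ← integral_Icc_eq_integral_Ioc,
    setIntegral_eq_integral_of_forall_compl_eq_zero hf]

theorem tendsto_integral_mul_of_tendstoUniformlyOn {α ι : Type*} [MeasurableSpace α]
    {μ : Measure α} {l : Filter ι} [l.IsCountablyGenerated] {s : Set α} {k : α → ℝ}
    {H : ι → α → ℝ} {L : ℝ} (hk : Integrable k μ) (hks : ∀ x ∉ s, k x = 0)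
    (hmeas : ∀ᶠ i in l, AEStronglyMeasurable (fun x => k x * H i x) μ)
    (hH : TendstoUniformlyOn H (fun _ => L) l s) :
    Tendsto (fun i => ∫ x, k x * H i x ∂μ) l (𝓝 ((∫ x, k x ∂μ) * L)) := by
  rw [← MeasureTheory.integral_mul_const]
  refine tendsto_integral_filter_of_dominated_convergence (fun x => ‖k x‖ * (|L| + 1)) hmeas
    ?_ (hk.norm.mul_const _) (Eventually.of_forall fun x => ?_)
  · filter_upwards [Metric.tendstoUniformlyOn_iff.1 hH 1 one_pos] with i hi
    refine Eventually.of_forall fun x => ?_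
    by_cases hx : x ∈ s
    · have hclose := hi x hx
      rw [Real.dist_eq] at hclose
      rw [norm_mul, Real.norm_eq_abs (H i x)]
      gcongr
      linarith [abs_sub_abs_le_abs_sub (H i x) L, abs_sub_comm L (H i x)]
    · simp [hks x hx]
  · by_cases hx : x ∈ s
    · exact (hH.tendsto_at hx).const_mul (k x)
    · simpa [hks x hx] using tendsto_const_nhds

section Convolution

variable {c₁ c₂ : ℝ} {φ k₁ k₂ : ℝ → ℝ}

theorem mem_Icc_add_of_mul_ne_zero (hs₁ : ∀ x ∉ Icc 0 c₁, k₁ x = 0)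
    (hs₂ : ∀ x ∉ Icc 0 c₂, k₂ x = 0) {x t : ℝ} (h : k₁ (x - t) * k₂ t ≠ 0) :
    x ∈ Icc 0 (c₁ + c₂) := by
  have h₁ : x - t ∈ Icc 0 c₁ := by_contra fun h' => h (by rw [hs₁ _ h', zero_mul])
  have h₂ : t ∈ Icc 0 c₂ := by_contra fun h' => h (by rw [hs₂ _ h', mul_zero])
  exact ⟨by linarith [h₁.1, h₂.1], by linarith [h₁.2, h₂.2]⟩

theorem integral_mul_sub_eq_zero_of_notMem_Icc (hs₁ : ∀ x ∉ Icc 0 c₁, k₁ x = 0)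
    (hs₂ : ∀ x ∉ Icc 0 c₂, k₂ x = 0) {x : ℝ} (hx : x ∉ Icc 0 (c₁ + c₂)) :
    ∫ t, k₁ (x - t) * k₂ t = 0 := by
  have hzero : ∀ t, k₁ (x - t) * k₂ t = 0 :=
    fun t => by_contra fun h => hx (mem_Icc_add_of_mul_ne_zero hs₁ hs₂ h)
  simp [hzero]

theorem integral_mul_sub_comm (f g : ℝ → ℝ) (x : ℝ) :
    ∫ t, f (x - t) * g t = ∫ t, g (x - t) * f t := by
  have h := integral_sub_left_eq_self (μ := volume) (fun t => g (x - t) * f t) x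
  simp only [sub_sub_cancel] at h
  rw [← h]
  simp_rw [mul_comm]

theorem MeasureTheory.Integrable.mul_sub_mul (hk₁ : Integrable k₁) (hk₂ : Integrable k₂) :
    Integrable (fun p : ℝ × ℝ => k₁ (p.1 - p.2) * k₂ p.2) (volume.prod volume) := by
  simpa [mul_comm] using hk₂.convolution_integrand (ContinuousLinearMap.mul ℝ ℝ) hk₁

theorem Continuous.integrable_mul_mul_sub_mul (hφ : Continuous φ) (hk₁ : Integrable k₁)
    (hk₂ : Integrable k₂) (hs₁ : ∀ x ∉ Icc 0 c₁, k₁ x = 0) (hs₂ : ∀ x ∉ Icc 0 c₂, k₂ x = 0) :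
    Integrable (fun p : ℝ × ℝ => φ p.1 * (k₁ (p.1 - p.2) * k₂ p.2)) (volume.prod volume) := by
  obtain ⟨C, hC⟩ := (isCompact_Icc (a := 0) (b := c₁ + c₂)).exists_bound_of_continuousOn
    hφ.continuousOn
  -- `φ` may be replaced by its bounded truncation to `[0, c₁ + c₂]`, off which the kernel vanishes
  have hbdd := (hk₁.mul_sub_mul hk₂).bdd_mul (c := max C 0)
    (f := fun p => (Icc 0 (c₁ + c₂)).indicator φ p.1)
    ((hφ.measurable.indicator measurableSet_Icc).comp measurable_fst).aestronglyMeasurable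
    (Eventually.of_forall fun p => ?_)
  · refine hbdd.congr (Eventually.of_forall fun p => ?_)
    by_cases h : k₁ (p.1 - p.2) * k₂ p.2 = 0
    · simp [h]
    · simp [indicator_of_mem (mem_Icc_add_of_mul_ne_zero hs₁ hs₂ h)]
  · by_cases h : p.1 ∈ Icc 0 (c₁ + c₂)
    · simpa only [indicator_of_mem h] using (hC _ h).trans (le_max_left _ _)
    · simp [indicator_of_notMem h]

theorem integral_mul_mul_sub_mul_eq (hs₁ : ∀ x ∉ Icc 0 c₁, k₁ x = 0) (hc₁ : 0 ≤ c₁) (t : ℝ) :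
    ∫ x, φ x * (k₁ (x - t) * k₂ t) = k₂ t * ∫ x in 0..c₁, φ (x + t) * k₁ x := by
  calc ∫ x, φ x * (k₁ (x - t) * k₂ t)
      = ∫ x, φ (x + t) * (k₁ (x + t - t) * k₂ t) :=
        (integral_add_right_eq_self (fun x => φ x * (k₁ (x - t) * k₂ t)) t).symm
    _ = k₂ t * ∫ x, φ (x + t) * k₁ x := by
        rw [← MeasureTheory.integral_const_mul]
        congr 1 with x
        rw [add_sub_cancel_right]
        ring
    _ = k₂ t * ∫ x in 0..c₁, φ (x + t) * k₁ x := by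
        rw [intervalIntegral_eq_integral_of_forall_notMem_Icc hc₁ fun x hx => by simp [hs₁ x hx]]

theorem Continuous.integrable_mul_intervalIntegral_shift (hφ : Continuous φ)
    (hk₁ : Integrable k₁) (hk₂ : Integrable k₂) (hs₁ : ∀ x ∉ Icc 0 c₁, k₁ x = 0)
    (hs₂ : ∀ x ∉ Icc 0 c₂, k₂ x = 0) (hc₁ : 0 ≤ c₁) :
    Integrable (fun t => k₂ t * ∫ x in 0..c₁, φ (x + t) * k₁ x) :=
  (hφ.integrable_mul_mul_sub_mul hk₁ hk₂ hs₁ hs₂).integral_prod_right.congr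
    (Eventually.of_forall (integral_mul_mul_sub_mul_eq hs₁ hc₁))

theorem Continuous.intervalIntegral_mul_convolution_eq (hφ : Continuous φ)
    (hk₁ : Integrable k₁) (hk₂ : Integrable k₂) (hs₁ : ∀ x ∉ Icc 0 c₁, k₁ x = 0)
    (hs₂ : ∀ x ∉ Icc 0 c₂, k₂ x = 0) (hc₁ : 0 ≤ c₁) (hc₂ : 0 ≤ c₂) :
    ∫ x in 0..c₁ + c₂, φ x * ∫ t, k₁ (x - t) * k₂ t
      = ∫ t, k₂ t * ∫ x in 0..c₁, φ (x + t) * k₁ x := by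
  calc ∫ x in 0..c₁ + c₂, φ x * ∫ t, k₁ (x - t) * k₂ t
      = ∫ x, φ x * ∫ t, k₁ (x - t) * k₂ t :=
        intervalIntegral_eq_integral_of_forall_notMem_Icc (by linarith) fun x hx => by
          rw [integral_mul_sub_eq_zero_of_notMem_Icc hs₁ hs₂ hx, mul_zero]
    _ = ∫ x, ∫ t, φ x * (k₁ (x - t) * k₂ t) := by simp_rw [MeasureTheory.integral_const_mul]
    _ = ∫ t, ∫ x, φ x * (k₁ (x - t) * k₂ t) :=
        integral_integral_swap (hφ.integrable_mul_mul_sub_mul hk₁ hk₂ hs₁ hs₂)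
    _ = ∫ t, k₂ t * ∫ x in 0..c₁, φ (x + t) * k₁ x := by
        simp_rw [integral_mul_mul_sub_mul_eq hs₁ hc₁]

theorem Continuous.tendsto_intervalIntegral_mul_neg_convolution {F : ℝ → ℝ} {L : ℝ}
    (hF : Continuous F) (hk₁ : Integrable k₁) (hk₂ : Integrable k₂)
    (hs₁ : ∀ x ∉ Icc 0 c₁, k₁ x = 0) (hs₂ : ∀ x ∉ Icc 0 c₂, k₂ x = 0)
    (hc₁ : 0 ≤ c₁) (hc₂ : 0 ≤ c₂) (hk₂sum : ∫ x, k₂ x = -1)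
    (hunif : TendstoUniformlyOn (fun b s => ∫ x in 0..c₁, F (x + s + b) * k₁ x)
      (fun _ => L) atTop (Icc 0 c₂)) :
    Tendsto (fun b => ∫ x in 0..c₁ + c₂, F (x + b) * -∫ t, k₁ (x - t) * k₂ t) atTop (𝓝 L) := by
  have hφ : ∀ b, Continuous fun x => F (x + b) := fun b => hF.comp (continuous_add_const b)
  have h := tendsto_integral_mul_of_tendstoUniformlyOn hk₂ hs₂ (Eventually.of_forall fun b =>
    ((hφ b).integrable_mul_intervalIntegral_shift hk₁ hk₂ hs₁ hs₂ hc₁).aestronglyMeasurable) hunif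
  rw [hk₂sum, neg_one_mul] at h
  simpa [mul_neg, intervalIntegral.integral_neg,
    (hφ _).intervalIntegral_mul_convolution_eq hk₁ hk₂ hs₁ hs₂ hc₁ hc₂] using h.neg

end Convolution

theorem terminated_integral_linear_general
    (cf cg : ℝ) (hcf : 0 < cf) (hcg : 0 < cg)
    (F G zf' zg' : ℝ → ℝ) (Lf Lg α β : ℝ)
    (hF : Continuous F) (hG : Continuous G)
    (hzf'int : Integrable zf') (hzg'int : Integrable zg')
    (hzf'supp : ∀ x, x ∉ Set.Icc (0:ℝ) cf → zf' x = 0)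
    (hzg'supp : ∀ x, x ∉ Set.Icc (0:ℝ) cg → zg' x = 0)
    (hzf'sum : ∫ x, zf' x = -1) (hzg'sum : ∫ x, zg' x = -1)
    (z' : ℝ → ℝ) (hz' : ∀ x, z' x = -∫ t, zf' (x - t) * zg' t)
    (huniff : TendstoUniformlyOn
      (fun b s => ∫ x in (0:ℝ)..cf, F (x + s + b) * zf' x)
      (fun _ => Lf) atTop (Set.Icc 0 cg))
    (hunifg : TendstoUniformlyOn
      (fun b s => ∫ x in (0:ℝ)..cg, G (x + s + b) * zg' x)
      (fun _ => Lg) atTop (Set.Icc 0 cf)) :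
    Tendsto (fun b => ∫ x in (0:ℝ)..(cf + cg), (α * F (x + b) + β * G (x + b)) * z' x)
      atTop (nhds (α * Lf + β * Lg)) := by
  have hz'int : Integrable z' :=
    (hzf'int.mul_sub_mul hzg'int).integral_prod_left.neg.congr
      (Eventually.of_forall fun x => (hz' x).symm)
  have hlimF : Tendsto (fun b => ∫ x in 0..cf + cg, F (x + b) * z' x) atTop (𝓝 Lf) := by
    simpa only [hz'] using hF.tendsto_intervalIntegral_mul_neg_convolution hzf'int hzg'int
      hzf'supp hzg'supp hcf.le hcg.le hzg'sum huniff
  have hlimG : Tendsto (fun b => ∫ x in 0..cf + cg, G (x + b) * z' x) atTop (𝓝 Lg) := by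
    simpa only [hz', integral_mul_sub_comm zg' zf', add_comm cg] using
      hG.tendsto_intervalIntegral_mul_neg_convolution hzg'int hzf'int hzg'supp hzf'supp
        hcg.le hcf.le hzf'sum hunifg
  refine ((hlimF.const_mul α).add (hlimG.const_mul β)).congr fun b => ?_
  have hint : ∀ {H : ℝ → ℝ}, Continuous H →
      IntervalIntegrable (fun x => H (x + b) * z' x) volume 0 (cf + cg) := fun hH =>
    hz'int.intervalIntegrable.continuousOn_mul (hH.comp (continuous_add_const b)).continuousOn
  rw [← intervalIntegral.integral_const_mul, ← intervalIntegral.integral_const_mul,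
    ← intervalIntegral.integral_add ((hint hF).const_mul α) ((hint hG).const_mul β)]
  congr 1 with x
  ring

/-- Linearity of the terminated integral: with `z'` the negative convolution of
`z_f'` and `z_g'`, the terminated limit of `α F + β G` exists and equals the
corresponding linear combination of the two terminated limits. -/
theorem terminated_integral_linear
    (cf cg : ℝ) (hcf : 0 < cf) (hcg : 0 < cg)
    (F G zf' zg' : ℝ → ℝ) (Lf Lg α β : ℝ)
    (hF : Continuous F) (hG : Continuous G)
    (hzf'int : Integrable zf') (hzg'int : Integrable zg')
    (hzf'supp : ∀ x, x ∉ Set.Icc (0:ℝ) cf → zf' x = 0)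
    (hzg'supp : ∀ x, x ∉ Set.Icc (0:ℝ) cg → zg' x = 0)
    (hzf'sum : ∫ x, zf' x = -1) (hzg'sum : ∫ x, zg' x = -1)
    (z' : ℝ → ℝ) (hz' : ∀ x, z' x = -∫ t, zf' (x - t) * zg' t)
    (hlimf : Tendsto (fun b => ∫ x in (0:ℝ)..cf, F (x + b) * zf' x) atTop (nhds Lf))
    (hlimg : Tendsto (fun b => ∫ x in (0:ℝ)..cg, G (x + b) * zg' x) atTop (nhds Lg))
    (huniff : TendstoUniformlyOn
      (fun b s => ∫ x in (0:ℝ)..cf, F (x + s + b) * zf' x)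
      (fun _ => Lf) atTop (Set.Icc 0 cg))
    (hunifg : TendstoUniformlyOn
      (fun b s => ∫ x in (0:ℝ)..cg, G (x + s + b) * zg' x)
      (fun _ => Lg) atTop (Set.Icc 0 cf)) :
    Tendsto (fun b => ∫ x in (0:ℝ)..(cf + cg), (α * F (x + b) + β * G (x + b)) * z' x)
      atTop (nhds (α * Lf + β * Lg)) :=
  terminated_integral_linear_general cf cg hcf hcg F G zf' zg' Lf Lg α β hF hG hzf'int hzg'int
    hzf'supp hzg'supp hzf'sum hzg'sum z' hz' huniff hunifg
end

section
/- Differentiation under the terminated integral for sin(xy): for y > 0, d/dy [cos(ay)/y] = -cos(ay)/y² - a sin(ay)/y, and this equals the terminated integral of ∂/∂y sin(xy) = x cos(xy) over [a,∞), i.e. lim_{b→∞}[∫_a^b x cos(xy) dx + (3/4)∫_b^{b+π/y} x cos(xy) dx + (1/4)∫_{b+π/y}^{b+2π/y} x cos(xy) dx] = -cos(ay)/y² - a sin(ay)/y. -/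
open Filter intervalIntegral Real

/- Integrating by parts, `x sin (x y) / y + cos (x y) / y²` is a primitive of `x cos (x y)`.
Shifting `x` by `π / y` flips the sign of both trigonometric factors, so with the weights
`1, 3/4, 1/4` the boundary terms at `b`, `b + π / y`, `b + 2π / y` enter with coefficients
`1/4, 1/2, 1/4` and cancel exactly. The terminated expression is therefore independent of `b`
and equals minus the primitive at `a`, which is the derivative of `cos (a y) / y`. -/

theorem hasDerivAt_cos_mul_div (a : ℝ) {t : ℝ} (ht : t ≠ 0) :
    HasDerivAt (fun t => cos (a * t) / t) (-(cos (a * t) / t ^ 2) - a * sin (a * t) / t) t := by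
  have hcos : HasDerivAt (fun t => cos (a * t)) (-sin (a * t) * a) t :=
    (hasDerivAt_cos (a * t)).comp t (by simpa using (hasDerivAt_id t).const_mul a)
  refine (hcos.div (hasDerivAt_id t) ht).congr_deriv ?_
  simp only [id]
  field_simp
  ring

theorem hasDerivAt_mul_sin_mul_div_add_cos_mul_div_sq {y : ℝ} (hy : y ≠ 0) (x : ℝ) :
    HasDerivAt (fun x => x * sin (x * y) / y + cos (x * y) / y ^ 2) (x * cos (x * y)) x := by
  have hxy : HasDerivAt (fun x => x * y) y x := by simpa using (hasDerivAt_id x).mul_const y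
  have hsin := (hasDerivAt_sin (x * y)).comp x hxy
  have hcos := (hasDerivAt_cos (x * y)).comp x hxy
  refine ((((hasDerivAt_id x).mul hsin).div_const y).add (hcos.div_const (y ^ 2))).congr_deriv ?_
  simp only [id, Function.comp_apply]
  field_simp
  ring

theorem integral_mul_cos_mul {y : ℝ} (hy : y ≠ 0) (p q : ℝ) :
    ∫ x in p..q, x * cos (x * y) =
      (q * sin (q * y) / y + cos (q * y) / y ^ 2) - (p * sin (p * y) / y + cos (p * y) / y ^ 2) :=
  integral_eq_sub_of_hasDerivAt (fun x _ => hasDerivAt_mul_sin_mul_div_add_cos_mul_div_sq hy x)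
    ((continuous_id.mul (continuous_cos.comp (continuous_mul_const y))).intervalIntegrable p q)

theorem terminated_integral_mul_cos_mul_eq {y : ℝ} (hy : y ≠ 0) (a b : ℝ) :
    (∫ x in a..b, x * cos (x * y)) +
        (3/4) * (∫ x in b..(b + π / y), x * cos (x * y)) +
        (1/4) * ∫ x in (b + π / y)..(b + 2 * π / y), x * cos (x * y) =
      -(cos (a * y) / y ^ 2) - a * sin (a * y) / y := by
  have shift_pi : (b + π / y) * y = b * y + π := by field_simp
  have shift_two_pi : (b + 2 * π / y) * y = b * y + 2 * π := by field_simp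
  simp only [integral_mul_cos_mul hy, shift_pi, shift_two_pi, sin_add_pi, cos_add_pi,
    sin_add_two_pi, cos_add_two_pi]
  field_simp
  ring

/-- Example 5: differentiation under the terminated integral for `sin (x y)`:
`d/dy [cos (a y)/y] = -cos (a y)/y² - a sin (a y)/y`, and this equals the
terminated integral of `∂/∂y sin (x y) = x cos (x y)` over `[a, ∞)`. -/
theorem deriv_under_terminated_integral_sin
    (a y : ℝ) (hy : 0 < y) :
    HasDerivAt (fun t => Real.cos (a * t) / t)
      (-(Real.cos (a * y) / y ^ 2) - a * Real.sin (a * y) / y) y ∧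
    Tendsto (fun b => (∫ x in a..b, x * Real.cos (x * y)) +
        (3/4) * (∫ x in b..(b + π / y), x * Real.cos (x * y)) +
        (1/4) * ∫ x in (b + π / y)..(b + 2 * π / y), x * Real.cos (x * y))
      atTop (nhds (-(Real.cos (a * y) / y ^ 2) - a * Real.sin (a * y) / y)) :=
  ⟨hasDerivAt_cos_mul_div a hy.ne',
    tendsto_const_nhds.congr fun b => (terminated_integral_mul_cos_mul_eq hy.ne' a b).symm⟩
end
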